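/- Let f, g be proper convex functions on X with dom f ⊆ dom g, g evenly convex. Then for all x*, y* ∈ X* and α ∈ ℝ: (f − g)^c(−x*,−y*,α) = sup_{(u*,v*,γ) ∈ dom g^c} { f^c(u* − x*, −y*, α) − g^c(u*,v*,γ) }. -/

import Mathlib

noncomputable section
open Classical

/-- The space `W = X* × X* × ℝ` of the c-conjugation scheme. -/
abbrev W (X : Type*) [AddCommGroup X] [Module ℝ X] [TopologicalSpace X] : Type _ :=
  (X →L[ℝ] ℝ) × (X →L[ℝ] ℝ) × ℝ

variable {X : Type*} [AddCommGroup X] [Module ℝ X] [TopologicalSpace X]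

/-- The coupling function `c(x,(x*,y*,α)) = ⟨x,x*⟩` if `⟨x,y*⟩ < α`, `+∞` otherwise. -/
def cpl (x : X) (w : W X) : EReal :=
  if w.2.1 x < w.2.2 then ((w.1 x : ℝ) : EReal) else ⊤

/-- The c-conjugate `f^c(w) = sup_x { c(x,w) − f(x) }`. -/
def cConj (f : X → EReal) (w : W X) : EReal := ⨆ x : X, cpl x w - f x

/-- The c'-conjugate `h^{c'}(x) = sup_w { c'(w,x) − h(w) }`. -/
def cpConj (h : W X → EReal) (x : X) : EReal := ⨆ w : W X, cpl x w - h w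

/-- Subtraction with the DC convention `(+∞) − (+∞) = +∞`. -/
def dcSub (a b : EReal) : EReal := if a = ⊤ then ⊤ else a - b

/-- Indicator function `δ_A`. -/
def indic (A : Set X) (x : X) : EReal := if x ∈ A then (0 : EReal) else ⊤

/-- Epigraph of a function on `W`. -/
def epiW (h : W X → EReal) : Set (W X × ℝ) := {p | h p.1 ≤ (p.2 : EReal)}

/-- Effective domain. -/
def domE {α : Type*} (f : α → EReal) : Set α := {x | f x ≠ ⊤}

/-- The inner expression of the Fenchel-type dual problems. -/
def dualExpr (f g : X → EReal) (A : Set X) (z w : W X) : EReal :=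
  cConj g w - cConj f (w.1 - z.1, -z.2.1, z.2.2) - cConj (indic A) z

/-- The set `Z = X* × X* × ℝ_{++}`. -/
def Zset (X : Type*) [AddCommGroup X] [Module ℝ X] [TopologicalSpace X] : Set (W X) :=
  {z | 0 < z.2.2}

/-- Primal optimal value `v(P) = inf_X { f − g + δ_A }`. -/
def vP (f g : X → EReal) (A : Set X) : EReal := ⨅ x : X, dcSub (f x) (g x) + indic A x

/-- Dual optimal value `v(D^F)`. -/
def vDF (f g : X → EReal) (A : Set X) : EReal :=
  ⨆ z ∈ Zset X, ⨅ w ∈ domE (cConj g), dualExpr f g A z w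

/-- Dual optimal value `v(D̄^F)`. -/
def vDbarF (f g : X → EReal) (A : Set X) : EReal :=
  ⨅ w ∈ domE (cConj g), ⨆ z ∈ Zset X, dualExpr f g A z w

/-- The set `Ω`. -/
def OmegaSet (f g : X → EReal) (A : Set X) : Set (W X × ℝ) :=
  ⋃ z ∈ domE (cConj (indic A)), ⋂ w ∈ domE (cConj g),
    (fun p : W X × ℝ =>
        p - ((w.1, 0, 0), (cConj g w).toReal - (cConj (indic A) z).toReal)) ''
      epiW (cConj (fun x => dcSub (f x) (cpl x (-z.1, -z.2.1, z.2.2))))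

/-- The set `K`. -/
def Kset (f g : X → EReal) (A : Set X) : Set (W X × ℝ) :=
  ⋂ w ∈ domE (cConj g), ⋃ z ∈ domE (cConj (indic A)),
    (fun p : W X × ℝ =>
        p - ((w.1, 0, 0), (cConj g w).toReal - (cConj (indic A) z).toReal)) ''
      epiW (cConj (fun x => dcSub (f x) (cpl x (-z.1, -z.2.1, z.2.2))))

/-- The set `B = {(0,0)} × ℝ_{++} × ℝ`. -/
def Bset (X : Type*) [AddCommGroup X] [Module ℝ X] [TopologicalSpace X] :
    Set (W X × ℝ) :=
  {p | p.1.1 = 0 ∧ p.1.2.1 = 0 ∧ 0 < p.1.2.2}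

/-- Properness of an extended-real-valued function. -/
def ProperFn {α : Type*} (f : α → EReal) : Prop := (∀ x, f x ≠ ⊥) ∧ ∃ x, f x ≠ ⊤

/-- Convexity of an extended-real-valued function via its epigraph. -/
def ConvexFn (f : X → EReal) : Prop := Convex ℝ {p : X × ℝ | f p.1 ≤ (p.2 : EReal)}

/-- Evenly convex set. -/
def EvenlyConvexSet {Y : Type*} [AddCommGroup Y] [Module ℝ Y] [TopologicalSpace Y]
    (C : Set Y) : Prop :=
  ∀ y0 ∉ C, ∃ φ : Y →L[ℝ] ℝ, ∀ y ∈ C, φ (y - y0) < 0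

/-- Evenly convex function: its epigraph is an evenly convex subset of `X × ℝ`. -/
def EConvexFn (f : X → EReal) : Prop :=
  EvenlyConvexSet {p : X × ℝ | f p.1 ≤ (p.2 : EReal)}

/-!
Even convexity of `g` lets one separate `(x₀, r)`, for `r < g x₀ < ∞`, from the epigraph of `g`
by a non-vertical functional; normalised, it yields `w = (u, 0, 1) ∈ dom g^c` with
`⟨x₀, u⟩ - g^c(w) ≥ r`. Hence `g = sup_{w ∈ dom g^c} (⟨·, w.1⟩ - g^c(w))` on `dom g`, while on
`dom g` every `w ∈ dom g^c` couples finitely. Substituting this for `g x` in `f x - g x`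
and exchanging the suprema over `x` and `w` gives the formula; a point of `dom f` where the
coupling is `+∞` makes both sides `+∞`.
-/

lemma cpl_ne_bot (x : X) (w : W X) : cpl x w ≠ ⊥ := by
  unfold cpl; split_ifs <;> simp

lemma sub_le_cConj (f : X → EReal) (x : X) (w : W X) : cpl x w - f x ≤ cConj f w :=
  le_iSup (fun x => cpl x w - f x) x

lemma cConj_eq_top {f : X → EReal} {x : X} {w : W X} (hfx : f x ≠ ⊤)
    (hx : ¬ w.2.1 x < w.2.2) : cConj f w = ⊤ := by
  have h := sub_le_cConj f x w
  rwa [cpl, if_neg hx, EReal.top_sub hfx, top_le_iff] at h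

lemma lt_of_mem_domE_cConj {g : X → EReal} {x : X} {w : W X} (hgx : g x ≠ ⊤)
    (hw : w ∈ domE (cConj g)) : w.2.1 x < w.2.2 :=
  not_not.1 fun hx => hw (cConj_eq_top hgx hx)

lemma cConj_ne_bot {g : X → EReal} (hg : ∃ x, g x ≠ ⊤) (w : W X) : cConj g w ≠ ⊥ := by
  obtain ⟨x, hx⟩ := hg
  refine ne_bot_of_le_ne_bot ?_ (sub_le_cConj g x w)
  rw [sub_eq_add_neg]
  exact EReal.add_ne_bot_iff.2 ⟨cpl_ne_bot x w, by simpa using hx⟩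

lemma EConvexFn.exists_affine_minorant {g : X → EReal} (hge : EConvexFn g) {x₀ : X}
    {r s₀ : ℝ} (hr : (r : EReal) < g x₀) (hs₀ : g x₀ ≤ s₀) :
    ∃ u : X →L[ℝ] ℝ, ∀ x (s : ℝ), g x ≤ s → u x - s ≤ u x₀ - r := by
  obtain ⟨φ, hφ⟩ := hge (x₀, r) (not_le.2 hr)
  set t := φ (0, 1)
  have hφ_apply : ∀ x (s : ℝ), φ ((x, s) - (x₀, r)) = φ (x, 0) - φ (x₀, 0) + (s - r) * t := by
    intro x s
    rw [← smul_eq_mul, ← map_smul, ← map_sub, ← map_add]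
    congr 1
    ext <;> simp
  have ht : t < 0 := by
    have h := hφ (x₀, s₀) hs₀
    have hrs : r < s₀ := by exact_mod_cast hr.trans_le hs₀
    rw [hφ_apply, sub_self, zero_add] at h
    nlinarith
  refine ⟨(-t)⁻¹ • φ.comp (ContinuousLinearMap.inl ℝ X ℝ), fun x s hs => ?_⟩
  have h := hφ (x, s) hs
  rw [hφ_apply] at h
  simp only [smul_apply, ContinuousLinearMap.comp_apply,
    ContinuousLinearMap.inl_apply, smul_eq_mul]
  have hdiv : (-t)⁻¹ * (φ (x, 0) - φ (x₀, 0)) ≤ s - r := by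
    rw [inv_mul_le_iff₀ (neg_pos.2 ht)]; nlinarith
  rw [mul_sub] at hdiv
  linarith

lemma EConvexFn.exists_cConj_le {g : X → EReal} (hg : ∀ x, g x ≠ ⊥) (hge : EConvexFn g)
    {x₀ : X} {r b : ℝ} (hb : g x₀ = b) (hr : r < b) :
    ∃ w ∈ domE (cConj g), ∃ c : ℝ, cConj g w = c ∧ r ≤ w.1 x₀ - c := by
  obtain ⟨u, hu⟩ := hge.exists_affine_minorant (hb ▸ EReal.coe_lt_coe_iff.2 hr) hb.le
  -- with `y* = 0` and `α = 1` the coupling `c(·, (u, 0, 1))` is just `u`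
  have hle : cConj g (u, 0, 1) ≤ ((u x₀ - r : ℝ) : EReal) := by
    refine iSup_le fun x => ?_
    rw [cpl, if_pos (by simp)]
    induction hgx : g x using EReal.rec with
    | bot => exact absurd hgx (hg x)
    | top => simp
    | coe s => exact_mod_cast hu x s hgx.le
  have hne_bot := cConj_ne_bot ⟨x₀, hb ▸ EReal.coe_ne_top b⟩ ((u, 0, 1) : W X)
  have hne_top : cConj g (u, 0, 1) ≠ ⊤ := ne_top_of_le_ne_top (EReal.coe_ne_top _) hle
  refine ⟨(u, 0, 1), hne_top, _, (EReal.coe_toReal hne_top hne_bot).symm, ?_⟩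
  have := EReal.toReal_le_toReal hle hne_bot (EReal.coe_ne_top _)
  simp only [EReal.toReal_coe] at this
  linarith

section

variable {f g : X → EReal}

lemma cpl_sub_dcSub_le_iSup (hf : ∀ x, f x ≠ ⊥) (hg : ∀ x, g x ≠ ⊥) (hge : EConvexFn g)
    (hdom : domE f ⊆ domE g) (v : W X) (x : X) :
    cpl x v - dcSub (f x) (g x) ≤
      ⨆ w ∈ domE (cConj g), (cConj f (w.1 + v.1, v.2) - cConj g w) := by
  by_cases hfx : f x = ⊤
  · simp [dcSub, hfx]
  obtain ⟨a, ha⟩ : ∃ a : ℝ, f x = a := ⟨_, (EReal.coe_toReal hfx (hf x)).symm⟩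
  obtain ⟨b, hb⟩ : ∃ b : ℝ, g x = b := ⟨_, (EReal.coe_toReal (hdom hfx) (hg x)).symm⟩
  rw [dcSub, if_neg hfx, ha, hb]
  by_cases hv : v.2.1 x < v.2.2
  · rw [cpl, if_pos hv, ← EReal.coe_sub, ← EReal.coe_sub]
    refine EReal.ge_of_forall_gt_iff_ge.1 fun y hy => ?_
    rw [EReal.coe_lt_coe_iff] at hy
    obtain ⟨w, hw, c, hc, hrc⟩ :=
      hge.exists_cConj_le hg hb (r := y - v.1 x + a) (by linarith)
    refine le_iSup₂_of_le w hw (le_trans ?_ (EReal.sub_le_sub (sub_le_cConj f x _) le_rfl))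
    rw [cpl, if_pos hv, ha, hc, ← EReal.coe_sub, ← EReal.coe_sub, EReal.coe_le_coe_iff,
      add_apply]
    linarith
  · obtain ⟨w, hw, c, hc, -⟩ := hge.exists_cConj_le hg hb (sub_one_lt b)
    refine le_iSup₂_of_le w hw ?_
    rw [cConj_eq_top (w := (w.1 + v.1, v.2)) (ha ▸ EReal.coe_ne_top a) hv, hc,
      EReal.top_sub_coe]
    exact le_top

lemma sub_cConj_le_cConj_dcSub (hf : ∀ x, f x ≠ ⊥) (hg : ProperFn g) (hdom : domE f ⊆ domE g)
    (v : W X) {w : W X} (hw : w ∈ domE (cConj g)) :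
    cConj f (w.1 + v.1, v.2) - cConj g w ≤ cConj (fun x => dcSub (f x) (g x)) v := by
  obtain ⟨c, hc⟩ : ∃ c : ℝ, cConj g w = c :=
    ⟨_, (EReal.coe_toReal hw (cConj_ne_bot hg.2 w)).symm⟩
  rw [hc, EReal.sub_le_iff_le_add (.inl (EReal.coe_ne_bot c)) (.inl (EReal.coe_ne_top c))]
  refine iSup_le fun x => ?_
  by_cases hfx : f x = ⊤
  · simp [hfx]
  obtain ⟨a, ha⟩ : ∃ a : ℝ, f x = a := ⟨_, (EReal.coe_toReal hfx (hf x)).symm⟩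
  obtain ⟨b, hb⟩ : ∃ b : ℝ, g x = b := ⟨_, (EReal.coe_toReal (hdom hfx) (hg.1 x)).symm⟩
  have hdc : dcSub (f x) (g x) = ((a - b : ℝ) : EReal) := by
    rw [dcSub, if_neg hfx, ha, hb, EReal.coe_sub]
  by_cases hv : v.2.1 x < v.2.2
  · have hL := sub_le_cConj (fun x => dcSub (f x) (g x)) x v
    have hG := sub_le_cConj g x w
    rw [cpl, if_pos hv, hdc, ← EReal.coe_sub] at hL
    rw [cpl, if_pos (lt_of_mem_domE_cConj (hdom hfx) hw), hb, hc, ← EReal.coe_sub,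
      EReal.coe_le_coe_iff] at hG
    rw [cpl, if_pos hv, ha, ← EReal.coe_sub]
    calc (((w.1 + v.1) x - a : ℝ) : EReal) ≤ ((v.1 x - (a - b) + c : ℝ) : EReal) := by
          rw [EReal.coe_le_coe_iff, add_apply]; linarith
      _ = ((v.1 x - (a - b) : ℝ) : EReal) + c := EReal.coe_add _ _
      _ ≤ _ := add_le_add_left hL _
  · rw [cConj_eq_top (hdc ▸ EReal.coe_ne_top _) hv, EReal.top_add_coe]
    exact le_top

theorem cConj_dcSub_eq_iSup (hf : ∀ x, f x ≠ ⊥) (hg : ProperFn g) (hge : EConvexFn g)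
    (hdom : domE f ⊆ domE g) (v : W X) :
    cConj (fun x => dcSub (f x) (g x)) v =
      ⨆ w ∈ domE (cConj g), (cConj f (w.1 + v.1, v.2) - cConj g w) :=
  le_antisymm (iSup_le (cpl_sub_dcSub_le_iSup hf hg.1 hge hdom v))
    (iSup₂_le fun _ hw => sub_cConj_le_cConj_dcSub hf hg hdom v hw)

end

theorem cConj_dc_formula_general
    {X : Type*} [AddCommGroup X] [Module ℝ X] [TopologicalSpace X]
    (f g : X → EReal)
    (hf : ProperFn f) (hg : ProperFn g)
    (hge : EConvexFn g) (hdom : domE f ⊆ domE g)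
    (xs ys : X →L[ℝ] ℝ) (α : ℝ) :
    cConj (fun x => dcSub (f x) (g x)) (-xs, -ys, α) =
      ⨆ w ∈ domE (cConj g), (cConj f (w.1 - xs, -ys, α) - cConj g w) := by
  simpa only [sub_eq_add_neg] using cConj_dcSub_eq_iSup hf.1 hg hge hdom (-xs, -ys, α)

/-- If `f, g` are proper convex, `dom f ⊆ dom g` and `g` is evenly convex, then
`(f − g)^c(−x*,−y*,α) = sup_{(u*,v*,γ) ∈ dom g^c} { f^c(u*−x*,−y*,α) − g^c(u*,v*,γ) }`. -/
theorem cConj_dc_formula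
    {X : Type*} [AddCommGroup X] [Module ℝ X] [TopologicalSpace X]
    (f g : X → EReal)
    (hf : ProperFn f) (hfc : ConvexFn f) (hg : ProperFn g) (hgc : ConvexFn g)
    (hge : EConvexFn g) (hdom : domE f ⊆ domE g)
    (xs ys : X →L[ℝ] ℝ) (α : ℝ) :
    cConj (fun x => dcSub (f x) (g x)) (-xs, -ys, α) =
      ⨆ w ∈ domE (cConj g), (cConj f (w.1 - xs, -ys, α) - cConj g w) :=
  cConj_dc_formula_general f g hf hg hge hdom xs ys α

end
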